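/- For any G_n ∈ HL_n with n ≥ 8 and any g ≤ 2^{⌈n/2⌉}, the (g+1)-component edge connectivity satisfies cλ_{g+1}(G_n) ≤ n·g − e(g), where e(g) = Σ_{i=0}^{s} t_i·2^{t_i−1} + Σ_{i=0}^{s} i·2^{t_i} with g = Σ 2^{t_i} the binary expansion. -/

import Mathlib

/-- The strictly decreasing list of exponents `t_0 > t_1 > ⋯ > t_s` in the
binary expansion `g = Σ_{i=0}^{s} 2^(t_i)` of `g`. -/
def expList (g : ℕ) : List ℕ :=
  (((Finset.range (g + 1)).filter (fun k => g.testBit k)).sort (· ≤ ·)).reverse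

/-- `e g = Σ_{i=0}^{s} t_i·2^(t_i−1) + Σ_{i=0}^{s} i·2^(t_i)` over the binary
expansion `g = Σ_{i=0}^{s} 2^(t_i)` with `t_0 > t_1 > ⋯ > t_s ≥ 0` (and `e 0 = 0`). -/
def eHL (g : ℕ) : ℕ :=
  ((expList g).zipIdx.map (fun p => p.1 * 2 ^ (p.1 - 1) + p.2 * 2 ^ p.1)).sum

/-- Vertex type of `n`-dimensional HL-networks: `2^n` vertices. -/
def HLV : ℕ → Type
  | 0 => Unit
  | n + 1 => Bool × HLV n

instance HLV.fintype : ∀ n, Fintype (HLV n)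
  | 0 => inferInstanceAs (Fintype Unit)
  | n + 1 => letI := HLV.fintype n; inferInstanceAs (Fintype (Bool × HLV n))

/-- Join two graphs on the same vertex type by a perfect matching given by a
bijection `f`: the result lives on `Bool × V`, with the copy `false` carrying `G`,
the copy `true` carrying `G'`, and matching edges between `(false, v)` and `(true, f v)`. -/
def matchingJoin {V : Type} (G G' : SimpleGraph V) (f : V ≃ V) :
    SimpleGraph (Bool × V) where
  Adj x y :=
    (x.1 = false ∧ y.1 = false ∧ G.Adj x.2 y.2) ∨
    (x.1 = true ∧ y.1 = true ∧ G'.Adj x.2 y.2) ∨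
    (x.1 = false ∧ y.1 = true ∧ y.2 = f x.2) ∨
    (x.1 = true ∧ y.1 = false ∧ x.2 = f y.2)
  symm := by
    constructor
    rintro ⟨a, u⟩ ⟨b, v⟩ h
    dsimp at h ⊢
    rcases h with ⟨h1, h2, h3⟩ | ⟨h1, h2, h3⟩ | ⟨h1, h2, h3⟩ | ⟨h1, h2, h3⟩
    · exact Or.inl ⟨h2, h1, h3.symm⟩
    · exact Or.inr (Or.inl ⟨h2, h1, h3.symm⟩)
    · exact Or.inr (Or.inr (Or.inr ⟨h2, h1, h3⟩))
    · exact Or.inr (Or.inr (Or.inl ⟨h2, h1, h3⟩))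
  loopless := by
    constructor
    rintro ⟨a, u⟩ h
    dsimp at h
    rcases h with ⟨_, _, h3⟩ | ⟨_, _, h3⟩ | ⟨h1, h2, _⟩ | ⟨h1, h2, _⟩
    · exact G.loopless.irrefl u h3
    · exact G'.loopless.irrefl u h3
    · simp_all
    · simp_all

/-- The class of `n`-dimensional hypercube-like networks (HL-networks):
`HL 1 = {K₂}`, and the members of `HL (n+1)` are exactly the graphs obtained by
joining two members of `HL n` by a perfect matching. -/
inductive IsHL : (n : ℕ) → SimpleGraph (HLV n) → Prop
  | base : IsHL 1 ⊤
  | step {n : ℕ} {G G' : SimpleGraph (HLV n)} (f : HLV n ≃ HLV n) :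
      IsHL n G → IsHL n G' → IsHL (n + 1) (matchingJoin G G' f)

/-- The `g`-component edge connectivity `cλ_g(G)`: the least size of a set `F`
of edges of `G` whose deletion leaves a graph with at least `g` connected
components. -/
noncomputable def cLambda {V : Type} (G : SimpleGraph V) (g : ℕ) : ℕ :=
  sInf {k | ∃ F : Set (Sym2 V), F ⊆ G.edgeSet ∧ F.ncard = k ∧
    g ≤ Nat.card ((G.deleteEdges F).ConnectedComponent)}

/-!
Deleting every edge that meets a set `S` of `g` vertices isolates each vertex of `S`, which leaves
at least `g + 1` components as long as `S` is not everything. Since an HL-network `G_n` is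
`n`-regular, the number of deleted edges is `∑_{v ∈ S} deg v - e(G[S]) = n g - e(G[S])`, so it
suffices to find `S` spanning at least `e(g)` edges. This goes by induction along the matching
join: if `g ≤ 2^m`, take `S` inside the first copy; otherwise take the whole first copy, which has
`m 2^(m-1)` edges, together with a dense `r`-set of the second copy, `r = g - 2^m`, which adds its
`r` matching edges. This is exactly the recursion `e(2^m + r) = m 2^(m-1) + r + e(r)`.
-/

open Finset

theorem expList_eq_reverse_bitIndices (g : ℕ) : expList g = g.bitIndices.reverse := by
  rw [expList]
  congr 1
  refine (sortedLT_sort _).eq_of_mem_iff Nat.bitIndices_sorted fun k => ?_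
  simp only [mem_sort, mem_filter, mem_range, Nat.mem_bitIndices, and_iff_right_iff_imp]
  intro hk
  have := Nat.ge_two_pow_of_testBit hk
  have := k.lt_two_pow_self
  omega

theorem Nat.bitIndices_two_pow_add {m r : ℕ} (h : r < 2 ^ m) :
    (2 ^ m + r).bitIndices = r.bitIndices ++ [m] := by
  have hsorted : (r.bitIndices ++ [m]).SortedLT := by
    rw [List.sortedLT_iff_pairwise, List.pairwise_append]
    refine ⟨Nat.bitIndices_sorted.pairwise, by simp, fun a ha b hb => ?_⟩
    rw [List.mem_singleton.mp hb]
    exact (Nat.pow_lt_pow_iff_right one_lt_two).mp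
      ((Nat.two_pow_le_of_mem_bitIndices ha).trans_lt h)
  simpa [add_comm] using Nat.bitIndices_sum_map_two_pow hsorted

theorem expList_two_pow_add {m r : ℕ} (h : r < 2 ^ m) :
    expList (2 ^ m + r) = m :: expList r := by
  simp [expList_eq_reverse_bitIndices, Nat.bitIndices_two_pow_add h]

theorem sum_map_two_pow_expList (g : ℕ) : ((expList g).map (2 ^ ·)).sum = g := by
  simp [expList_eq_reverse_bitIndices, List.map_reverse, List.sum_reverse]

theorem eHL_zero : eHL 0 = 0 := by
  simp [eHL, expList_eq_reverse_bitIndices]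

theorem eHL_two_pow_add {m r : ℕ} (h : r < 2 ^ m) :
    eHL (2 ^ m + r) = m * 2 ^ (m - 1) + r + eHL r := by
  -- the new leading exponent `m` shifts every index `i` by one, adding `∑ 2 ^ t_i = r`
  have hshift :
      (fun p : ℕ × ℕ => p.1 * 2 ^ (p.1 - 1) + p.2 * 2 ^ p.1) ∘ Prod.map id (· + 1) =
        fun p => (p.1 * 2 ^ (p.1 - 1) + p.2 * 2 ^ p.1) + 2 ^ p.1 := by
    funext p
    simp only [Function.comp_apply, Prod.map_fst, Prod.map_snd, id]
    ring
  have hfst : ((expList r).zipIdx.map fun p => 2 ^ p.1).sum = r := by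
    conv_rhs => rw [← sum_map_two_pow_expList r, ← List.zipIdx_map_fst 0 (expList r),
      List.map_map]
    rfl
  rw [eHL, eHL, expList_two_pow_add h, List.zipIdx_cons', List.map_cons, List.sum_cons,
    List.map_map, hshift, List.sum_map_add, hfst]
  ring

theorem eHL_two_pow (m : ℕ) : eHL (2 ^ m) = m * 2 ^ (m - 1) := by
  simpa [eHL_zero] using eHL_two_pow_add (Nat.two_pow_pos m)

theorem eHL_two_pow_add_of_le {m r : ℕ} (h : r ≤ 2 ^ m) :
    eHL (2 ^ m + r) = m * 2 ^ (m - 1) + r + eHL r := by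
  rcases h.lt_or_eq with h | rfl
  · exact eHL_two_pow_add h
  · rw [← two_mul, ← pow_succ', eHL_two_pow, eHL_two_pow]
    cases m <;> simp [pow_succ]
    ring

theorem card_HLV : ∀ n, Fintype.card (HLV n) = 2 ^ n
  | 0 => rfl
  | n + 1 => by
    rw [pow_succ', ← card_HLV n]
    exact Fintype.card_prod Bool (HLV n)

section matchingJoin

variable {V : Type} (G G' : SimpleGraph V) (f : V ≃ V) (u w : V)

@[simp] theorem matchingJoin_adj_false_false :
    (matchingJoin G G' f).Adj (false, u) (false, w) ↔ G.Adj u w := by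
  simp [matchingJoin]

@[simp] theorem matchingJoin_adj_true_true :
    (matchingJoin G G' f).Adj (true, u) (true, w) ↔ G'.Adj u w := by
  simp [matchingJoin]

@[simp] theorem matchingJoin_adj_false_true :
    (matchingJoin G G' f).Adj (false, u) (true, w) ↔ w = f u := by
  simp [matchingJoin]

@[simp] theorem matchingJoin_adj_true_false :
    (matchingJoin G G' f).Adj (true, u) (false, w) ↔ f w = u := by
  simpa [matchingJoin] using eq_comm

end matchingJoin

namespace SimpleGraph

section Edges

open Classical

variable {V : Type*} [Fintype V] (G : SimpleGraph V) (S : Finset V)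

noncomputable def innerEdges : Finset (Sym2 V) := {e ∈ G.edgeFinset | ∀ v ∈ e, v ∈ S}

noncomputable def incidentEdges : Finset (Sym2 V) := {e ∈ G.edgeFinset | ∃ v ∈ e, v ∈ S}

variable {G S}

@[simp] theorem mk_mem_innerEdges {a b : V} :
    s(a, b) ∈ G.innerEdges S ↔ G.Adj a b ∧ a ∈ S ∧ b ∈ S := by
  simp [innerEdges]

@[simp] theorem mk_mem_incidentEdges {a b : V} :
    s(a, b) ∈ G.incidentEdges S ↔ G.Adj a b ∧ (a ∈ S ∨ b ∈ S) := by
  simp [incidentEdges]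

theorem incidentEdges_subset_edgeSet : (G.incidentEdges S : Set (Sym2 V)) ⊆ G.edgeSet := by
  intro e he
  simpa using (filter_subset _ _ he : e ∈ G.edgeFinset)

theorem innerEdges_subset_incidentEdges : G.innerEdges S ⊆ G.incidentEdges S := by
  intro e
  induction e using Sym2.ind
  simp +contextual

variable (G S)

theorem card_incidentEdges_add_card_innerEdges_le :
    #(G.incidentEdges S) + #(G.innerEdges S) ≤ ∑ v ∈ S, G.degree v := by
  have hends : ∀ e ∈ G.incidentEdges S,
      (1 + if e ∈ G.innerEdges S then 1 else 0) ≤ #(S.bipartiteBelow (· ∈ ·) e) := by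
    intro e
    induction e using Sym2.ind with | _ a b => ?_
    intro he
    obtain ⟨hab, hS⟩ := mk_mem_incidentEdges.mp he
    split_ifs with hin
    · obtain ⟨-, ha, hb⟩ := mk_mem_innerEdges.mp hin
      calc 1 + 1 = #{a, b} := (card_pair hab.ne).symm
        _ ≤ _ := card_le_card (by simp [insert_subset_iff, ha, hb])
    · refine card_pos.mpr ?_
      rcases hS with ha | hb
      · exact ⟨a, by simp [ha]⟩
      · exact ⟨b, by simp [hb]⟩
  have hdeg : ∀ v ∈ S, #((G.incidentEdges S).bipartiteAbove (· ∈ ·) v) = G.degree v := by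
    intro v hv
    rw [← card_incidenceFinset_eq_degree]
    congr 1
    ext e
    induction e using Sym2.ind
    simp only [mem_bipartiteAbove, mk_mem_incidentEdges, mem_incidenceFinset,
      mk'_mem_incidenceSet_iff, Sym2.mem_iff]
    grind
  -- double count the incidences `v ∈ e` between `S` and the edges meeting it: such an edge is
  -- hit once, or twice if it lies inside `S`
  calc #(G.incidentEdges S) + #(G.innerEdges S)
      = ∑ e ∈ G.incidentEdges S, (1 + if e ∈ G.innerEdges S then 1 else 0) := by
        rw [sum_add_distrib, sum_boole, filter_mem_eq_inter,
          inter_eq_right.mpr innerEdges_subset_incidentEdges]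
        simp
    _ ≤ ∑ e ∈ G.incidentEdges S, #(S.bipartiteBelow (· ∈ ·) e) := sum_le_sum hends
    _ = ∑ v ∈ S, G.degree v := by
      rw [← sum_card_bipartiteAbove_eq_sum_card_bipartiteBelow, sum_congr rfl hdeg]

theorem not_adj_deleteEdges_incidentEdges {v : V} (hv : v ∈ S) (w : V) :
    ¬ (G.deleteEdges (G.incidentEdges S)).Adj v w := by
  simp +contextual [hv]

end Edges

theorem card_add_one_le_card_connectedComponent {V : Type*} [Finite V] {H : SimpleGraph V}
    {S : Finset V} {w : V} (hw : w ∉ S) (hS : ∀ v ∈ S, ∀ u, ¬ H.Adj v u) :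
    #S + 1 ≤ Nat.card H.ConnectedComponent := by
  have hiso : ∀ v ∈ S, ∀ u, H.Reachable v u → v = u := by
    rintro v hv u ⟨_ | ⟨hadj, -⟩⟩
    · rfl
    · exact absurd hadj (hS v hv _)
  have hinj : Set.InjOn H.connectedComponentMk (insert w (S : Set V)) := by
    intro x hx y hy hxy
    have hxy := ConnectedComponent.exact hxy
    rcases hx with rfl | hx
    · rcases hy with rfl | hy
      · rfl
      · exact (hiso y hy x hxy.symm).symm
    · exact hiso x hx y hxy
  simpa [Set.ncard_insert_of_notMem (mem_coe.not.mpr hw)] using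
    Nat.card_le_card_of_injective _ hinj.injective

section matchingJoin

open Classical

variable {V : Type} [Fintype V]

theorem IsRegularOfDegree.matchingJoin {G G' : SimpleGraph V} {k : ℕ}
    (hG : G.IsRegularOfDegree k) (hG' : G'.IsRegularOfDegree k) (f : V ≃ V) :
    (_root_.matchingJoin G G' f).IsRegularOfDegree (k + 1) := by
  rintro ⟨b, u⟩
  rw [← card_neighborFinset_eq_degree]
  cases b
  · have : (_root_.matchingJoin G G' f).neighborFinset (false, u) =
        insert (true, f u) ((G.neighborFinset u).map (Function.Embedding.sectR false V)) := by
      ext ⟨c, w⟩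
      cases c <;> simp [eq_comm]
    rw [this, card_insert_of_notMem (by simp), card_map, card_neighborFinset_eq_degree, hG]
  · have : (_root_.matchingJoin G G' f).neighborFinset (true, u) =
        insert (false, f.symm u)
          ((G'.neighborFinset u).map (Function.Embedding.sectR true V)) := by
      ext ⟨c, w⟩
      cases c <;> simp [Equiv.eq_symm_apply]
    rw [this, card_insert_of_notMem (by simp), card_map, card_neighborFinset_eq_degree, hG']

theorem card_innerEdges_add_le_card_innerEdges_matchingJoin (G G' : SimpleGraph V) (f : V ≃ V)
    (S S' : Finset V) :
    #(G.innerEdges S) + #(G'.innerEdges S') + #{w ∈ S' | f.symm w ∈ S} ≤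
      #((_root_.matchingJoin G G' f).innerEdges ({false} ×ˢ S ∪ {true} ×ˢ S')) := by
  set T₁ := (G.innerEdges S).image (Sym2.map (Prod.mk false))
  set T₂ := (G'.innerEdges S').image (Sym2.map (Prod.mk true))
  set T₃ := {w ∈ S' | f.symm w ∈ S}.image fun w => s((false, f.symm w), (true, w))
  have hT₁ : #T₁ = #(G.innerEdges S) :=
    card_image_of_injective _ (Sym2.map.injective (Prod.mk_right_injective false))
  have hT₂ : #T₂ = #(G'.innerEdges S') :=
    card_image_of_injective _ (Sym2.map.injective (Prod.mk_right_injective true))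
  have hT₃ : #T₃ = #{w ∈ S' | f.symm w ∈ S} :=
    card_image_of_injective _ fun a b h => by simpa using h
  have h₁₂ : Disjoint T₁ T₂ := by
    simp only [T₁, T₂, Finset.disjoint_left, mem_image, not_exists, not_and]
    rintro _ ⟨e, -, rfl⟩ e' -
    induction e using Sym2.ind
    induction e' using Sym2.ind
    simp
  have h₁₂₃ : Disjoint (T₁ ∪ T₂) T₃ := by
    simp only [T₁, T₂, T₃, Finset.disjoint_left, mem_union, mem_image, not_exists, not_and]
    rintro _ (⟨e, -, rfl⟩ | ⟨e, -, rfl⟩) w - <;>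
    · induction e using Sym2.ind
      simp
  have hsub : T₁ ∪ T₂ ∪ T₃ ⊆
      (_root_.matchingJoin G G' f).innerEdges ({false} ×ˢ S ∪ {true} ×ˢ S') := by
    refine union_subset (union_subset ?_ ?_) ?_ <;> intro _ hx <;>
      obtain ⟨e, he, rfl⟩ := mem_image.mp hx
    · induction e using Sym2.ind
      simpa using he
    · induction e using Sym2.ind
      simpa using he
    · simpa [and_comm] using he
  calc _ = #(T₁ ∪ T₂ ∪ T₃) := by
        rw [card_union_of_disjoint h₁₂₃, card_union_of_disjoint h₁₂, hT₁, hT₂, hT₃]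
    _ ≤ _ := card_le_card hsub

def HasDenseSubsets (G : SimpleGraph V) : Prop :=
  ∀ g ≤ Fintype.card V, ∃ S : Finset V, #S = g ∧ eHL g ≤ #(G.innerEdges S)

theorem HasDenseSubsets.matchingJoin {G G' : SimpleGraph V} {m : ℕ}
    (hV : Fintype.card V = 2 ^ m) (hG : G.HasDenseSubsets) (hG' : G'.HasDenseSubsets)
    (f : V ≃ V) : (_root_.matchingJoin G G' f).HasDenseSubsets := by
  have hcard : ∀ S S' : Finset V, #({false} ×ˢ S ∪ {true} ×ˢ S') = #S + #S' := by
    intro S S'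
    rw [card_union_of_disjoint (by simp [Finset.disjoint_left]), card_product, card_product]
    simp
  intro g hg
  rw [Fintype.card_prod, Fintype.card_bool, hV, ← pow_succ'] at hg
  rcases le_or_gt g (2 ^ m) with hsmall | hbig
  · obtain ⟨S, hS, he⟩ := hG g (hV ▸ hsmall)
    refine ⟨{false} ×ˢ S ∪ {true} ×ˢ ∅, by rw [hcard, hS, card_empty, add_zero],
      he.trans ?_⟩
    exact le_trans (by omega) (card_innerEdges_add_le_card_innerEdges_matchingJoin G G' f S ∅)
  · obtain ⟨r, rfl⟩ : ∃ r, g = 2 ^ m + r := ⟨g - 2 ^ m, by omega⟩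
    have hr : r ≤ 2 ^ m := by rw [pow_succ] at hg; omega
    obtain ⟨S, hS, he⟩ := hG (2 ^ m) hV.ge
    obtain rfl : S = univ := eq_univ_of_card S (hS.trans hV.symm)
    obtain ⟨S', hS', he'⟩ := hG' r (hV ▸ hr)
    refine ⟨{false} ×ˢ univ ∪ {true} ×ˢ S', by rw [hcard, hS, hS'], ?_⟩
    have hjoin := card_innerEdges_add_le_card_innerEdges_matchingJoin G G' f univ S'
    rw [filter_true_of_mem (fun _ _ => mem_univ _), hS'] at hjoin
    rw [eHL_two_pow_add_of_le hr, ← eHL_two_pow]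
    omega

end matchingJoin

end SimpleGraph

open SimpleGraph

theorem cLambda_le_card_incidentEdges {V : Type} [Fintype V] (G : SimpleGraph V)
    {S : Finset V} {w : V} (hw : w ∉ S) : cLambda G (#S + 1) ≤ #(G.incidentEdges S) :=
  Nat.sInf_le ⟨_, incidentEdges_subset_edgeSet, Set.ncard_coe_finset _,
    card_add_one_le_card_connectedComponent hw fun _ hv =>
      not_adj_deleteEdges_incidentEdges G S hv⟩

namespace IsHL

variable {n : ℕ} {G : SimpleGraph (HLV n)}

open Classical in
theorem isRegularOfDegree (hG : IsHL n G) : G.IsRegularOfDegree n := by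
  induction hG with
  | base =>
    convert IsRegularOfDegree.top (V := HLV 1)
    rw [card_HLV]
    rfl
  | step f _ _ ihG ihG' => exact ihG.matchingJoin ihG' f

theorem hasDenseSubsets (hG : IsHL n G) : G.HasDenseSubsets := by
  induction hG with
  | base =>
    intro g hg
    rw [card_HLV] at hg
    obtain ⟨S, -, hS⟩ := exists_subset_card_eq (s := (univ : Finset (HLV 1))) (n := g)
      (by rwa [card_univ, card_HLV])
    refine ⟨S, hS, ?_⟩
    interval_cases g
    · simp [eHL_zero]
    · simp [show eHL 1 = 0 from eHL_two_pow 0]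
    · obtain rfl : S = univ := eq_univ_of_card S (by rw [hS, card_HLV]; rfl)
      obtain ⟨a, b, hab⟩ :=
        Fintype.exists_pair_of_one_lt_card (α := HLV 1) (by simp [card_HLV])
      rw [show (2 : ℕ) = 2 ^ 1 from rfl, eHL_two_pow]
      exact card_pos.mpr ⟨s(a, b), by simpa using hab⟩
  | @step m G G' f _ _ ih ih' => exact ih.matchingJoin (card_HLV m) ih' f

end IsHL

theorem isHL_cLambda_upper (n g : ℕ) (G : SimpleGraph (HLV n)) (hG : IsHL n G)
    (hn : 8 ≤ n) (hg : g ≤ 2 ^ ((n + 1) / 2)) :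
    cLambda G (g + 1) ≤ n * g - eHL g := by
  classical
  have hlt : g < 2 ^ n := hg.trans_lt (Nat.pow_lt_pow_right one_lt_two (by omega))
  obtain ⟨S, rfl, hS⟩ := hG.hasDenseSubsets g (by rw [card_HLV]; exact hlt.le)
  obtain ⟨w, hw⟩ : ∃ w, w ∉ S := by
    by_contra! h
    rw [eq_univ_of_forall h, card_univ, card_HLV] at hlt
    exact lt_irrefl _ hlt
  have hcount := G.card_incidentEdges_add_card_innerEdges_le S
  rw [sum_congr rfl fun v _ => hG.isRegularOfDegree.degree_eq v, sum_const, smul_eq_mul,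
    mul_comm] at hcount
  calc cLambda G (#S + 1) ≤ #(G.incidentEdges S) := cLambda_le_card_incidentEdges G hw
    _ ≤ n * #S - eHL #S := Nat.le_sub_of_add_le (by omega)
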